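/- Let i, j ∈ [n] with i ≠ j, and let a, b ∈ PB be bases of the integer polymatroid P such that a_t = b_t for every t ∈ [n] ∖ {i, j} and a_i < b_i. Then for every index k > i, if k is internally active with respect to a, then k is internally active with respect to b. -/

import Mathlib

/-!
Write `b = a + d (e_i - e_j)` with `d = b i - a i > 0`, and suppose `c = b - e_k + e_l ∈ PB`
for some `l < k`. Since `k` is active for `a`, the exchanges `a - e_k + e_l` and `a - e_k + e_i`
fail, which yields `a`-tight sets `I ∋ l` and `J ∋ i` avoiding `k`. Feasibility of `c` on `I`
forces `j ∈ I`, and feasibility of `b` on `J` forces `j ∈ J`. By submodularity `I ∪ J`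
is `a`-tight; it contains both `i` and `j`, so it is `b`-tight as well, and `c` violates its
constraint.
-/

open Finset

variable {n : ℕ}

/-- The set of bases of the integer polymatroid with rank function `f` on ground set `Fin n`:
integer vectors `a` with `a i ≥ 0`, `∑_{i ∈ I} a i ≤ f I` for every `I`, and `∑ i, a i = f [n]`.
(The upper bound `a i ≤ f {i}` used for the ambient finite set is implied by the constraints.) -/
noncomputable def PB (n : ℕ) (f : Finset (Fin n) → ℕ) : Finset (Fin n → ℤ) :=
  (Fintype.piFinset fun i : Fin n => Finset.Icc (0 : ℤ) (f {i})).filter fun a =>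
    (∀ I : Finset (Fin n), ∑ j ∈ I, a j ≤ (f I : ℤ)) ∧ ∑ j, a j = (f Finset.univ : ℤ)

/-- A set `I` is tight for `a` if `∑_{i ∈ I} a i = f I`. -/
def Tight (f : Finset (Fin n) → ℕ) (a : Fin n → ℤ) (I : Finset (Fin n)) : Prop :=
  ∑ i ∈ I, a i = (f I : ℤ)

/-- `i` is internally active with respect to `a`: `a - e_i + e_j ∉ PB` for every `j < i`. -/
def IntAct (f : Finset (Fin n) → ℕ) (a : Fin n → ℤ) (i : Fin n) : Prop :=
  ∀ j : Fin n, j < i → a - Pi.single i 1 + Pi.single j 1 ∉ PB n f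

/-- `i` is externally active with respect to `a`: `a + e_i - e_j ∉ PB` for every `j < i`. -/
def ExtAct (f : Finset (Fin n) → ℕ) (a : Fin n → ℤ) (i : Fin n) : Prop :=
  ∀ j : Fin n, j < i → a + Pi.single i 1 - Pi.single j 1 ∉ PB n f

open scoped Classical in
/-- `Int(a)`: the set of internally active indices. -/
noncomputable def IntSet (f : Finset (Fin n) → ℕ) (a : Fin n → ℤ) : Finset (Fin n) :=
  Finset.univ.filter fun i => IntAct f a i

open scoped Classical in
/-- `Ext(a)`: the set of externally active indices. -/
noncomputable def ExtSet (f : Finset (Fin n) → ℕ) (a : Fin n → ℤ) : Finset (Fin n) :=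
  Finset.univ.filter fun i => ExtAct f a i

/-- `ι(a) = |Int(a)|`, the internal activity. -/
noncomputable def iota (f : Finset (Fin n) → ℕ) (a : Fin n → ℤ) : ℕ := (IntSet f a).card

/-- `ε(a) = |Ext(a)|`, the external activity. -/
noncomputable def eps (f : Finset (Fin n) → ℕ) (a : Fin n → ℤ) : ℕ := (ExtSet f a).card

lemma mem_PB_iff {f : Finset (Fin n) → ℕ} {a : Fin n → ℤ} :
    a ∈ PB n f ↔ (∀ t, 0 ≤ a t) ∧ (∀ I : Finset (Fin n), ∑ t ∈ I, a t ≤ (f I : ℤ)) ∧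
      ∑ t, a t = (f univ : ℤ) := by
  simp only [PB, mem_filter, Fintype.mem_piFinset, mem_Icc]
  refine ⟨fun ⟨h0, hle, hs⟩ => ⟨fun t => (h0 t).1, hle, hs⟩,
    fun ⟨h0, hle, hs⟩ => ⟨fun t => ⟨h0 t, by simpa using hle {t}⟩, hle, hs⟩⟩

lemma sum_sub_single_add_single (a : Fin n → ℤ) (k l : Fin n) (I : Finset (Fin n)) :
    ∑ t ∈ I, (a - Pi.single k 1 + Pi.single l 1 : Fin n → ℤ) t =
      ∑ t ∈ I, a t - (if k ∈ I then 1 else 0) + (if l ∈ I then 1 else 0) := by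
  simp only [Pi.add_apply, Pi.sub_apply, sum_add_distrib, sum_sub_distrib]
  simp [Pi.single_apply]

lemma sub_single_add_single_mem_PB_iff {f : Finset (Fin n) → ℕ} {a : Fin n → ℤ}
    (ha : a ∈ PB n f) {k l : Fin n} (hlk : l ≠ k) :
    a - Pi.single k 1 + Pi.single l 1 ∈ PB n f ↔
      1 ≤ a k ∧ ∀ I : Finset (Fin n), l ∈ I → k ∉ I → ∑ t ∈ I, a t < (f I : ℤ) := by
  obtain ⟨ha0, hale, has⟩ := mem_PB_iff.mp ha
  rw [mem_PB_iff]
  constructor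
  · rintro ⟨hc0, hcle, -⟩
    refine ⟨by simpa [hlk] using hc0 k, fun I hlI hkI => ?_⟩
    have := hcle I
    rw [sum_sub_single_add_single, if_neg hkI, if_pos hlI] at this
    omega
  · rintro ⟨hak, hlt⟩
    refine ⟨fun t => ?_, fun I => ?_, by rw [sum_sub_single_add_single]; simp [has]⟩
    · have := ha0 t
      simp only [Pi.add_apply, Pi.sub_apply, Pi.single_apply]
      split_ifs <;> subst_vars <;> omega
    · have := hale I
      rw [sum_sub_single_add_single]
      by_cases hkI : k ∈ I
      · split_ifs <;> omega
      · by_cases hlI : l ∈ I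
        · have := hlt I hlI hkI
          simp only [if_neg hkI, if_pos hlI]
          omega
        · simp only [if_neg hkI, if_neg hlI]
          omega

lemma exists_tight_of_sub_single_add_single_notMem_PB {f : Finset (Fin n) → ℕ}
    {a : Fin n → ℤ} (ha : a ∈ PB n f) {k l : Fin n} (hlk : l ≠ k) (hak : 1 ≤ a k)
    (h : a - Pi.single k 1 + Pi.single l 1 ∉ PB n f) :
    ∃ I : Finset (Fin n), Tight f a I ∧ l ∈ I ∧ k ∉ I := by
  by_contra! hcon
  refine h ((sub_single_add_single_mem_PB_iff ha hlk).mpr ⟨hak, fun I hlI hkI => ?_⟩)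
  exact ((mem_PB_iff.mp ha).2.1 I).lt_of_ne fun hI => hkI (hcon I hI hlI)

lemma Tight.union {f : Finset (Fin n) → ℕ}
    (hsub : ∀ I J : Finset (Fin n), f (I ∪ J) + f (I ∩ J) ≤ f I + f J)
    {a : Fin n → ℤ} (hle : ∀ I : Finset (Fin n), ∑ t ∈ I, a t ≤ (f I : ℤ))
    {I J : Finset (Fin n)} (hI : Tight f a I) (hJ : Tight f a J) : Tight f a (I ∪ J) := by
  have hsum := sum_union_inter (s₁ := I) (s₂ := J) (f := a)
  have hf : (f (I ∪ J) : ℤ) + f (I ∩ J) ≤ f I + f J := by exact_mod_cast hsub I J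
  have := hle (I ∪ J)
  have := hle (I ∩ J)
  unfold Tight at hI hJ ⊢
  linarith

section TwoPointChange

variable {a b : Fin n → ℤ} {i j : Fin n}

lemma apply_eq_add_ite_sub_ite (hij : i ≠ j) (htot : ∑ t, a t = ∑ t, b t)
    (hagree : ∀ t, t ≠ i → t ≠ j → a t = b t) (t : Fin n) :
    b t = a t + (if t = i then b i - a i else 0) - (if t = j then b i - a i else 0) := by
  have hij_sum : (b i - a i) + (b j - a j) = 0 := by
    rw [← Fintype.sum_eq_add (f := fun t => b t - a t) i j hij
      fun t ⟨hti, htj⟩ => by rw [hagree t hti htj, sub_self], sum_sub_distrib, htot, sub_self]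
  by_cases hti : t = i
  · subst hti; simp [hij]
  · by_cases htj : t = j
    · subst htj; simp [hti]; omega
    · simp [hti, htj, hagree t hti htj]

lemma sum_eq_add_ite_sub_ite (hij : i ≠ j) (htot : ∑ t, a t = ∑ t, b t)
    (hagree : ∀ t, t ≠ i → t ≠ j → a t = b t) (I : Finset (Fin n)) :
    ∑ t ∈ I, b t =
      ∑ t ∈ I, a t + (if i ∈ I then b i - a i else 0) - (if j ∈ I then b i - a i else 0) := by
  rw [sum_congr rfl fun t _ => apply_eq_add_ite_sub_ite hij htot hagree t, sum_sub_distrib,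
    sum_add_distrib, sum_ite_eq', sum_ite_eq']

end TwoPointChange

theorem intAct_transfer_general
    (n : ℕ) (f : Finset (Fin n) → ℕ)
    (hsub : ∀ I J : Finset (Fin n), f (I ∪ J) + f (I ∩ J) ≤ f I + f J)
    (i j : Fin n) (hij : i ≠ j)
    (a b : Fin n → ℤ) (ha : a ∈ PB n f) (hb : b ∈ PB n f)
    (hagree : ∀ t : Fin n, t ≠ i → t ≠ j → a t = b t) (hi : a i < b i)
    (k : Fin n) (hk : i < k) (hka : IntAct f a k) :
    IntAct f b k := by
  intro l hlk hc
  obtain ⟨-, hale, has⟩ := mem_PB_iff.mp ha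
  obtain ⟨-, hble, hbs⟩ := mem_PB_iff.mp hb
  have htot : ∑ t, a t = ∑ t, b t := has.trans hbs.symm
  have hsum := sum_eq_add_ite_sub_ite hij htot hagree
  obtain ⟨hbk, hbI⟩ := (sub_single_add_single_mem_PB_iff hb hlk.ne).mp hc
  have hak : 1 ≤ a k := by
    have := apply_eq_add_ite_sub_ite hij htot hagree k
    rw [if_neg hk.ne'] at this
    split_ifs at this <;> omega
  obtain ⟨I, hI, hlI, hkI⟩ :=
    exists_tight_of_sub_single_add_single_notMem_PB ha hlk.ne hak (hka l hlk)
  obtain ⟨J, hJ, hiJ, hkJ⟩ :=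
    exists_tight_of_sub_single_add_single_notMem_PB ha hk.ne hak (hka i hk)
  have hjI : j ∈ I := by
    have := hbI I hlI hkI
    rw [hsum, hI] at this
    split_ifs at this <;> first | assumption | omega
  have hjJ : j ∈ J := by
    have := hble J
    rw [hsum, hJ, if_pos hiJ] at this
    split_ifs at this <;> first | assumption | omega
  have hIJ : Tight f b (I ∪ J) := by
    rw [Tight, hsum, hI.union hsub hale hJ, if_pos (mem_union_right I hiJ),
      if_pos (mem_union_left J hjI), add_sub_cancel_right]
  exact (hbI (I ∪ J) (mem_union_left J hlI) (by simp [hkI, hkJ])).ne hIJ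

/-- If bases `a, b` agree outside `{i, j}` and `a i < b i`, then every index `k > i`
internally active for `a` is internally active for `b`. -/
theorem intAct_transfer
    (n : ℕ) (hn : 0 < n) (f : Finset (Fin n) → ℕ)
    (hf0 : f ∅ = 0)
    (hmono : ∀ I J : Finset (Fin n), I ⊆ J → f I ≤ f J)
    (hsub : ∀ I J : Finset (Fin n), f (I ∪ J) + f (I ∩ J) ≤ f I + f J)
    (i j : Fin n) (hij : i ≠ j)
    (a b : Fin n → ℤ) (ha : a ∈ PB n f) (hb : b ∈ PB n f)
    (hagree : ∀ t : Fin n, t ≠ i → t ≠ j → a t = b t) (hi : a i < b i)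
    (k : Fin n) (hk : i < k) (hka : IntAct f a k) :
    IntAct f b k :=
  intAct_transfer_general n f hsub i j hij a b ha hb hagree hi k hk hka
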